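/- If n is odd and q is an odd prime dividing P_n, then -1 is a quadratic residue modulo q. -/
import Mathlib


def pellP : ℕ → ℕ
  | 0 => 0
  | 1 => 1
  | n + 2 => 2 * pellP (n + 1) + pellP n

def pellQ : ℕ → ℕ
  | 0 => 2
  | 1 => 2
  | n + 2 => 2 * pellQ (n + 1) + pellQ n

lemma pellQ_eq : ∀ n, pellQ (n+1) = 2 * pellP (n+1) + 2 * pellP n ∧
    pellQ (n+2) = 2 * pellP (n+2) + 2 * pellP (n+1)
  | 0 => by decide
  | n+1 => by
    obtain ⟨h1, h2⟩ := pellQ_eq n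
    refine ⟨h2, ?_⟩
    show 2 * pellQ (n+2) + pellQ (n+1) = 2 * (2 * pellP (n+2) + pellP (n+1)) + 2 * pellP (n+2)
    rw [h1, h2, show pellP (n+2) = 2*pellP (n+1) + pellP n from rfl]; ring

lemma cassini : ∀ n : ℕ, ((pellP (n+1) : ℤ))^2 - 2 * pellP n * pellP (n+1) - (pellP n)^2 = (-1)^n
  | 0 => by simp [pellP]
  | n+1 => by
    have h := cassini n
    have h2 : (pellP (n+2) : ℤ) = 2 * pellP (n+1) + pellP n := by
      show ((2 * pellP (n+1) + pellP n : ℕ) : ℤ) = _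
      push_cast; ring
    rw [h2, pow_succ]
    linear_combination -h

lemma key_ident (n : ℕ) : ((pellQ (n+1) : ℤ))^2 = 8 * (pellP (n+1))^2 - 4 * (-1)^n := by
  have h1 := (pellQ_eq n).1
  have h2 := cassini n
  have : (pellQ (n+1) : ℤ) = 2 * pellP (n+1) + 2 * pellP n := by
    rw [h1]; push_cast; ring
  rw [this]
  linear_combination (-4 : ℤ) * h2

theorem neg_one_is_square_of_dvd_pellP (n q : ℕ) (hn : Odd n) (hq : q.Prime)
    (hqodd : Odd q) (hdvd : q ∣ pellP n) : IsSquare (-1 : ZMod q) := by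
  haveI : Fact q.Prime := ⟨hq⟩
  obtain ⟨k, hk⟩ := hn
  have hq2 : (2 : ZMod q) ≠ 0 := by
    intro h
    have : q ∣ 2 := by
      have := (ZMod.natCast_eq_zero_iff 2 q).mp (by exact_mod_cast h)
      exact this
    have hq2' : q = 2 := (Nat.prime_dvd_prime_iff_eq hq Nat.prime_two).mp this
    rw [hq2'] at hqodd
    exact (by decide : ¬ Odd 2) hqodd
  have hP : (pellP n : ZMod q) = 0 := (ZMod.natCast_eq_zero_iff _ q).mpr hdvd
  have hident := key_ident (2 * k)
  rw [show ((-1 : ℤ))^(2*k) = 1 by rw [pow_mul]; simp] at hident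
  have hn' : n = 2 * k + 1 := hk
  have hcast : ((pellQ n : ZMod q))^2 = 8 * (pellP n : ZMod q)^2 - 4 := by
    have := congrArg (fun x : ℤ => (x : ZMod q)) hident
    rw [hn']
    push_cast at this
    linear_combination this
  rw [hP] at hcast
  refine ⟨(pellQ n : ZMod q) * 2⁻¹, ?_⟩
  field_simp
  linear_combination -hcast
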